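/- arXiv:2201.05948 — 2 statements merged into one kernel-verified Lean document; each statement's English description precedes it below -/
import Mathlib

section
/- Disconjugacy equals nonvanishing of the two-point determinant (Theorem 4.2, (i)⇔(iii)): Assume Hypothesis (H) and let λ ∈ ℝ. Then τ − λ is disconjugate on (a,b) if and only if every pair of real-valued linearly independent solutions u₁, u₂ of (τ − λ)u = 0 on (a,b) satisfies u₁(x₁)·u₂(x₂) − u₁(x₂)·u₂(x₁) ≠ 0 for every pair of points x₁, x₂ ∈ (a,b) with x₁ ≠ x₂. -/
open MeasureTheory Set Filter intervalIntegral

noncomputable section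

/-- The open interval of real numbers determined by extended-real endpoints `a`, `b`. -/
def EI (a b : EReal) : Set ℝ := {x : ℝ | a < (x : EReal) ∧ (x : EReal) < b}

/-- Hypothesis (H): `p, q, r, s` are real-valued measurable on `(a,b)`, `p > 0` and `r > 0`
a.e. on `(a,b)`, and `1/p, q, r, s ∈ L¹_loc((a,b); dx)`. -/
structure SLH (a b : EReal) (p q r s : ℝ → ℝ) : Prop where
  hab : a < b
  measp : Measurable p
  measq : Measurable q
  measr : Measurable r
  meass : Measurable s
  ppos : ∀ᵐ x ∂(volume : Measure ℝ), x ∈ EI a b → 0 < p x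
  rpos : ∀ᵐ x ∂(volume : Measure ℝ), x ∈ EI a b → 0 < r x
  invp_loc : LocallyIntegrableOn (fun x => 1 / p x) (EI a b) volume
  q_loc : LocallyIntegrableOn q (EI a b) volume
  r_loc : LocallyIntegrableOn r (EI a b) volume
  s_loc : LocallyIntegrableOn s (EI a b) volume

/-- `f` is locally absolutely continuous on the interval `I` with a.e. derivative `fd`. -/
def HasAEDerivOn (I : Set ℝ) (f fd : ℝ → ℝ) : Prop :=
  ∀ x ∈ I, ∀ y ∈ I,
    IntervalIntegrable fd volume x y ∧ f y - f x = ∫ t in x..y, fd t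

/-- `f ∈ 𝔇_τ(I)`: `f` is locally AC on `I` with a.e. derivative `fd`, the first
quasi-derivative `f1 = p (f' + s f)` (a.e.) is locally AC with a.e. derivative `f1d`. -/
def InDomTau (I : Set ℝ) (p s : ℝ → ℝ) (f fd f1 f1d : ℝ → ℝ) : Prop :=
  HasAEDerivOn I f fd ∧
    (∀ᵐ t ∂(volume : Measure ℝ), t ∈ I → f1 t = p t * (fd t + s t * f t)) ∧
    HasAEDerivOn I f1 f1d

/-- The differential expression `τ f = (1/r) (−(f^[1])′ + s f^[1] + q f)`. -/
def tauApp (q r s : ℝ → ℝ) (f f1 f1d : ℝ → ℝ) (t : ℝ) : ℝ :=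
  (1 / r t) * (-f1d t + s t * f1 t + q t * f t)

/-- `u` (with data `ud, u1, u1d`) is a real solution of `(τ - lam) u = 0` on `I`. -/
def IsSolutionWith (I : Set ℝ) (p q r s : ℝ → ℝ) (lam : ℝ) (u ud u1 u1d : ℝ → ℝ) : Prop :=
  InDomTau I p s u ud u1 u1d ∧
    ∀ᵐ t ∂(volume : Measure ℝ), t ∈ I → tauApp q r s u u1 u1d t = lam * u t

/-- `u` is a real solution of `(τ - lam) u = 0` on `I`. -/
def IsSolution (I : Set ℝ) (p q r s : ℝ → ℝ) (lam : ℝ) (u : ℝ → ℝ) : Prop :=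
  ∃ ud u1 u1d, IsSolutionWith I p q r s lam u ud u1 u1d

/-- Complex version: loc AC with a.e. derivative. -/
def HasAEDerivOnC (I : Set ℝ) (f fd : ℝ → ℂ) : Prop :=
  ∀ x ∈ I, ∀ y ∈ I,
    IntervalIntegrable fd volume x y ∧ f y - f x = ∫ t in x..y, fd t

/-- Complex version of `InDomTau`. -/
def InDomTauC (I : Set ℝ) (p s : ℝ → ℝ) (f fd f1 f1d : ℝ → ℂ) : Prop :=
  HasAEDerivOnC I f fd ∧
    (∀ᵐ t ∂(volume : Measure ℝ), t ∈ I → f1 t = (p t : ℂ) * (fd t + (s t : ℂ) * f t)) ∧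
    HasAEDerivOnC I f1 f1d

/-- Complex version of `τ`. -/
def tauAppC (q r s : ℝ → ℝ) (f f1 f1d : ℝ → ℂ) (t : ℝ) : ℂ :=
  (1 / (r t : ℂ)) * (-f1d t + (s t : ℂ) * f1 t + (q t : ℂ) * f t)

/-- `u` (with data) is a complex solution of `(τ - z) u = 0` on `I`. -/
def IsSolutionWithC (I : Set ℝ) (p q r s : ℝ → ℝ) (z : ℂ) (u ud u1 u1d : ℝ → ℂ) : Prop :=
  InDomTauC I p s u ud u1 u1d ∧
    ∀ᵐ t ∂(volume : Measure ℝ), t ∈ I → tauAppC q r s u u1 u1d t = z * u t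

/-- `u` does not vanish identically on `I`. -/
def NontrivOn (I : Set ℝ) (u : ℝ → ℝ) : Prop := ∃ x ∈ I, u x ≠ 0

/-- Linear independence of two real functions on `I`. -/
def LinIndepOn (I : Set ℝ) (u v : ℝ → ℝ) : Prop :=
  ∀ c₁ c₂ : ℝ, (∀ x ∈ I, c₁ * u x + c₂ * v x = 0) → c₁ = 0 ∧ c₂ = 0

/-- `τ - lam` is disconjugate on `I`: every nontrivial real solution has at most one zero. -/
def Disconjugate (I : Set ℝ) (p q r s : ℝ → ℝ) (lam : ℝ) : Prop :=
  ∀ u : ℝ → ℝ, IsSolution I p q r s lam u → NontrivOn I u →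
    ∀ x ∈ I, ∀ y ∈ I, u x = 0 → u y = 0 → x = y

/-- `f` has compact support contained in `I`. -/
def SuppIn (I : Set ℝ) (f : ℝ → ℂ) : Prop :=
  ∃ K : Set ℝ, IsCompact K ∧ K ⊆ I ∧ ∀ x ∈ I \ K, f x = 0

/-- Membership (with derivative data) in the domain of the pre-minimal operator `Ṫ`. -/
def InDomPreMin (a b : EReal) (p q r s : ℝ → ℝ) (f fd f1 f1d : ℝ → ℂ) : Prop :=
  InDomTauC (EI a b) p s f fd f1 f1d ∧ SuppIn (EI a b) f ∧
    IntegrableOn (fun x => r x * ‖f x‖ ^ 2) (EI a b) volume ∧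
    IntegrableOn (fun x => r x * ‖tauAppC q r s f f1 f1d x‖ ^ 2) (EI a b) volume

/-- `(f, Ṫ f) ≥ lam0 ‖f‖²` for all `f ∈ dom(Ṫ)`. -/
def PreMinLowerBound (a b : EReal) (p q r s : ℝ → ℝ) (lam0 : ℝ) : Prop :=
  ∀ f fd f1 f1d : ℝ → ℂ, InDomPreMin a b p q r s f fd f1 f1d →
    lam0 * (∫ x in EI a b, r x * ‖f x‖ ^ 2) ≤
      (∫ x in EI a b, (r x : ℂ) * (starRingEnd ℂ (f x) * tauAppC q r s f f1 f1d x)).re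

/-- Membership (with derivative data) in the domain of the maximal operator `T_max`. -/
def InDomMax (a b : EReal) (p q r s : ℝ → ℝ) (g gd g1 g1d : ℝ → ℂ) : Prop :=
  InDomTauC (EI a b) p s g gd g1 g1d ∧
    IntegrableOn (fun x => r x * ‖g x‖ ^ 2) (EI a b) volume ∧
    IntegrableOn (fun x => r x * ‖tauAppC q r s g g1 g1d x‖ ^ 2) (EI a b) volume

/-- `τ - lam` is oscillatory at `b`: some nontrivial real solution has zeros accumulating at `b`. -/
def OscillatoryAtB (a b : EReal) (p q r s : ℝ → ℝ) (lam : ℝ) : Prop :=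
  ∃ u : ℝ → ℝ, IsSolution (EI a b) p q r s lam u ∧ NontrivOn (EI a b) u ∧
    ∀ c ∈ EI a b, ∃ x ∈ EI a b, c < x ∧ u x = 0

/-- `τ - lam` is oscillatory at `a`. -/
def OscillatoryAtA (a b : EReal) (p q r s : ℝ → ℝ) (lam : ℝ) : Prop :=
  ∃ u : ℝ → ℝ, IsSolution (EI a b) p q r s lam u ∧ NontrivOn (EI a b) u ∧
    ∀ c ∈ EI a b, ∃ x ∈ EI a b, x < c ∧ u x = 0

/-- The filter of real numbers tending to the endpoint `a` from the right. -/
def atEndA (a : EReal) : Filter ℝ :=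
  Filter.comap (fun x : ℝ => (x : EReal)) (nhdsWithin a (Set.Ioi a))

/-- The filter of real numbers tending to the endpoint `b` from the left. -/
def atEndB (b : EReal) : Filter ℝ :=
  Filter.comap (fun x : ℝ => (x : EReal)) (nhdsWithin b (Set.Iio b))

/-- `u` lies in `L²((a,b); r dx)` near `b`. -/
def L2NearB (a b : EReal) (r : ℝ → ℝ) (u : ℝ → ℂ) : Prop :=
  ∀ c ∈ EI a b, IntegrableOn (fun x => r x * ‖u x‖ ^ 2) (EI (c : EReal) b) volume

/-- `u` lies in `L²((a,b); r dx)` near `a`. -/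
def L2NearA (a b : EReal) (r : ℝ → ℝ) (u : ℝ → ℂ) : Prop :=
  ∀ c ∈ EI a b, IntegrableOn (fun x => r x * ‖u x‖ ^ 2) (EI a (c : EReal)) volume

/-- `τ` is in the limit circle case at `b`. -/
def LimitCircleAtB (a b : EReal) (p q r s : ℝ → ℝ) : Prop :=
  ∀ z : ℂ, ∀ u ud u1 u1d : ℝ → ℂ,
    IsSolutionWithC (EI a b) p q r s z u ud u1 u1d → L2NearB a b r u

/-- `τ` is in the limit circle case at `a`. -/
def LimitCircleAtA (a b : EReal) (p q r s : ℝ → ℝ) : Prop :=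
  ∀ z : ℂ, ∀ u ud u1 u1d : ℝ → ℂ,
    IsSolutionWithC (EI a b) p q r s z u ud u1 u1d → L2NearA a b r u

/-- `u` is a principal solution of `(τ - lam) u = 0` at `b` on the interval `I`. -/
def PrincipalAtB (I : Set ℝ) (b : EReal) (p q r s : ℝ → ℝ) (lam : ℝ) (u : ℝ → ℝ) : Prop :=
  IsSolution I p q r s lam u ∧ NontrivOn I u ∧
    ∀ v : ℝ → ℝ, IsSolution I p q r s lam v → LinIndepOn I u v →
      Tendsto (fun x => u x / v x) (atEndB b) (nhds 0)

/-- `u` is a principal solution of `(τ - lam) u = 0` at `a` on the interval `I`. -/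
def PrincipalAtA (I : Set ℝ) (a : EReal) (p q r s : ℝ → ℝ) (lam : ℝ) (u : ℝ → ℝ) : Prop :=
  IsSolution I p q r s lam u ∧ NontrivOn I u ∧
    ∀ v : ℝ → ℝ, IsSolution I p q r s lam v → LinIndepOn I u v →
      Tendsto (fun x => u x / v x) (atEndA a) (nhds 0)

/-- `v` is a nonprincipal solution of `(τ - lam) u = 0` at `b` on the interval `I`. -/
def NonprincipalAtB (I : Set ℝ) (b : EReal) (p q r s : ℝ → ℝ) (lam : ℝ) (v : ℝ → ℝ) : Prop :=
  IsSolution I p q r s lam v ∧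
    ∃ u : ℝ → ℝ, PrincipalAtB I b p q r s lam u ∧ LinIndepOn I u v

end

/-!
(⇒) If the determinant vanished at `x₁ ≠ x₂`, some combination `c₁ u₁ + c₂ u₂` with
`(c₁, c₂) ≠ 0` would be a solution vanishing at both points, and by linear independence it is
not identically zero. (⇐) If a nontrivial solution `u` vanished at `x ≠ y`, a solution `v` with
`v x = 1` would be independent of `u` with vanishing determinant at `x, y`.

Such a `v` exists because `(v, v^[1])` solves a first-order linear system `Y' = A Y` whose
coefficients are only locally integrable. On a subinterval with `∫ ‖A‖ < 1` the Picard operator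
is a contraction; a connectedness argument spreads local existence and uniqueness to every
compact subinterval, and uniqueness lets the solutions on `[[x₀, t]]` be glued into one on the
whole interval.
-/

open scoped Interval Topology

theorem MeasureTheory.IntegrableOn.eventually_integral_norm_uIcc_lt {F : Type*}
    [NormedAddCommGroup F] {f : ℝ → F} {K : Set ℝ} (hf : IntegrableOn f K) (hK : K.OrdConnected)
    {x : ℝ} (hx : x ∈ K) {ε : ℝ} (hε : 0 < ε) :
    ∀ᶠ y in 𝓝[K] x, ∫ t in [[x, y]], ‖f t‖ < ε := by
  have hlen : Tendsto (fun y => ENNReal.ofReal |y - x|) (𝓝[K] x) (𝓝 0) := by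
    have : Continuous fun y => ENNReal.ofReal |y - x| :=
      ENNReal.continuous_ofReal.comp (by fun_prop)
    simpa using (this.tendsto x).mono_left nhdsWithin_le_nhds
  have hvol : Tendsto ((volume.restrict K) ∘ fun y => [[x, y]]) (𝓝[K] x) (𝓝 0) :=
    tendsto_of_tendsto_of_tendsto_of_le_of_le tendsto_const_nhds hlen (fun _ => bot_le)
      fun y => (Measure.restrict_apply_le _ _).trans Real.volume_interval.le
  filter_upwards [(Integrable.tendsto_setIntegral_nhds_zero hf.norm hvol).eventually
    (gt_mem_nhds hε), self_mem_nhdsWithin] with y hy hyK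
  rwa [Measure.restrict_restrict_of_subset (hK.uIcc_subset hx hyK)] at hy

section LinearODE

variable {E : Type*} [NormedAddCommGroup E] [NormedSpace ℝ E]
  {A : ℝ → E →L[ℝ] E} {I J K : Set ℝ} {Y Z : ℝ → E} {a b e : ℝ}

def SolvesLinearODEOn (A : ℝ → E →L[ℝ] E) (I : Set ℝ) (Y : ℝ → E) : Prop :=
  ∀ x ∈ I, ∀ y ∈ I,
    IntervalIntegrable (fun t => A t (Y t)) volume x y ∧ Y y - Y x = ∫ t in x..y, A t (Y t)

namespace SolvesLinearODEOn

theorem mono (h : SolvesLinearODEOn A I Y) (hJI : J ⊆ I) : SolvesLinearODEOn A J Y :=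
  fun x hx y hy => h x (hJI hx) y (hJI hy)

theorem congr (h : SolvesLinearODEOn A I Y) (hI : I.OrdConnected) (hYZ : EqOn Y Z I) :
    SolvesLinearODEOn A I Z := by
  intro x hx y hy
  have hxy : EqOn (fun t => A t (Y t)) (fun t => A t (Z t)) [[x, y]] := fun t ht => by
    simp only [hYZ (hI.uIcc_subset hx hy ht)]
  obtain ⟨hint, heq⟩ := h x hx y hy
  refine ⟨hint.congr (hxy.mono uIoc_subset_uIcc), ?_⟩
  rw [← hYZ hx, ← hYZ hy, heq, integral_congr hxy]

theorem union (hI : SolvesLinearODEOn A I Y) (hJ : SolvesLinearODEOn A J Y)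
    (hIJ : (I ∩ J).Nonempty) : SolvesLinearODEOn A (I ∪ J) Y := by
  obtain ⟨z, hzI, hzJ⟩ := hIJ
  have to_z : ∀ x ∈ I ∪ J, IntervalIntegrable (fun t => A t (Y t)) volume x z ∧
      Y z - Y x = ∫ t in x..z, A t (Y t) := by
    rintro x (hx | hx)
    exacts [hI x hx z hzI, hJ x hx z hzJ]
  intro x hx y hy
  obtain ⟨hxz, hx⟩ := to_z x hx
  obtain ⟨hyz, hy⟩ := to_z y hy
  refine ⟨hxz.trans hyz.symm, ?_⟩
  rw [← integral_add_adjacent_intervals hxz hyz.symm, integral_symm y z, ← hx, ← hy]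
  abel

theorem sub (hY : SolvesLinearODEOn A I Y) (hZ : SolvesLinearODEOn A I Z) :
    SolvesLinearODEOn A I (Y - Z) := by
  intro x hx y hy
  obtain ⟨hYi, hYe⟩ := hY x hx y hy
  obtain ⟨hZi, hZe⟩ := hZ x hx y hy
  simp only [Pi.sub_apply, map_sub]
  refine ⟨hYi.sub hZi, ?_⟩
  rw [integral_sub hYi hZi, ← hYe, ← hZe]
  abel

theorem continuousOn_uIcc (h : SolvesLinearODEOn A [[a, b]] Y) : ContinuousOn Y [[a, b]] := by
  have hprim := continuousOn_primitive_interval' (h a left_mem_uIcc b right_mem_uIcc).1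
    left_mem_uIcc
  exact ((continuousOn_const (c := Y a)).add hprim).congr fun t ht =>
    sub_eq_iff_eq_add'.1 (h a left_mem_uIcc t ht).2

end SolvesLinearODEOn

theorem solvesLinearODEOn_uIcc_of_eq_integral
    (hint : IntegrableOn (fun t => A t (Y t)) [[a, b]]) (he : e ∈ [[a, b]])
    (hY : ∀ t ∈ [[a, b]], Y t = Y e + ∫ τ in e..t, A τ (Y τ)) :
    SolvesLinearODEOn A [[a, b]] Y := by
  intro x hx y hy
  have hii : ∀ z ∈ [[a, b]], IntervalIntegrable (fun t => A t (Y t)) volume e z := fun z hz =>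
    (hint.mono_set (uIcc_subset_uIcc he hz)).intervalIntegrable
  refine ⟨(hii x hx).symm.trans (hii y hy), ?_⟩
  rw [hY x hx, hY y hy, add_sub_add_left_eq_sub, integral_interval_sub_left (hii y hy) (hii x hx)]

theorem MeasureTheory.IntegrableOn.apply_continuousOn (hA : IntegrableOn A K)
    (hY : ContinuousOn Y K) (hK : IsCompact K) : IntegrableOn (fun t => A t (Y t)) K := by
  obtain ⟨C, hC⟩ := hK.exists_bound_of_continuousOn hY
  refine (hA.norm.mul_const C).mono' ?_ ((ae_restrict_iff' hK.measurableSet).2 <|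
    Eventually.of_forall fun t ht => ?_)
  · exact (ContinuousLinearMap.id ℝ (E →L[ℝ] E)).aestronglyMeasurable_comp₂ hA.1
      (hY.aestronglyMeasurable hK.measurableSet)
  · exact (A t).le_opNorm_of_le (hC t ht)

theorem norm_integral_apply_le (hA : IntegrableOn A [[a, b]]) {x y : ℝ} (hx : x ∈ [[a, b]])
    (hy : y ∈ [[a, b]]) {C : ℝ} (hY : ∀ t ∈ [[a, b]], ‖Y t‖ ≤ C) :
    ‖∫ t in x..y, A t (Y t)‖ ≤ (∫ t in [[a, b]], ‖A t‖) * C := by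
  have hsub : Ι x y ⊆ [[a, b]] := uIoc_subset_uIcc.trans (uIcc_subset_uIcc hx hy)
  have hC : 0 ≤ C := (norm_nonneg _).trans (hY a left_mem_uIcc)
  calc ‖∫ t in x..y, A t (Y t)‖ = ‖∫ t in Ι x y, A t (Y t)‖ :=
        norm_integral_eq_norm_integral_uIoc _
    _ ≤ ∫ t in Ι x y, ‖A t‖ * C := by
        refine norm_integral_le_of_norm_le ((hA.mono_set hsub).norm.mul_const C) ?_
        filter_upwards [ae_restrict_mem measurableSet_uIoc] with t ht
        exact (A t).le_opNorm_of_le (hY t (hsub ht))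
    _ ≤ ∫ t in [[a, b]], ‖A t‖ * C := by
        refine setIntegral_mono_set (hA.norm.mul_const C) ?_ (Eventually.of_forall hsub)
        exact Eventually.of_forall fun t => mul_nonneg (norm_nonneg _) hC
    _ = (∫ t in [[a, b]], ‖A t‖) * C := integral_mul_const C _

theorem SolvesLinearODEOn.eqOn_zero_of_integral_norm_lt_one (h : SolvesLinearODEOn A [[a, b]] Y)
    (hA : IntegrableOn A [[a, b]]) (hsmall : ∫ t in [[a, b]], ‖A t‖ < 1) (he : e ∈ [[a, b]])
    (hYe : Y e = 0) : EqOn Y 0 [[a, b]] := by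
  obtain ⟨tm, htm, hmax⟩ := isCompact_uIcc.exists_isMaxOn nonempty_uIcc
    h.continuousOn_uIcc.norm
  have hbound : ‖Y tm‖ ≤ (∫ t in [[a, b]], ‖A t‖) * ‖Y tm‖ := by
    have := norm_integral_apply_le hA he htm fun t ht => hmax ht
    rwa [← (h e he tm htm).2, hYe, sub_zero] at this
  have hzero : ‖Y tm‖ = 0 := by nlinarith [norm_nonneg (Y tm)]
  intro t ht
  simpa [hzero] using hmax ht

theorem exists_solvesLinearODEOn_uIcc_of_integral_norm_lt_one [CompleteSpace E]
    (hA : IntegrableOn A [[a, b]]) (hsmall : ∫ t in [[a, b]], ‖A t‖ < 1) (he : e ∈ [[a, b]])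
    (Y₀ : E) : ∃ Y, SolvesLinearODEOn A [[a, b]] Y ∧ Y e = Y₀ := by
  have : CompactSpace [[a, b]] := isCompact_iff_compactSpace.1 isCompact_uIcc
  set m := ∫ t in [[a, b]], ‖A t‖
  let extend : C([[a, b]], E) → ℝ → E := fun φ => IccExtend inf_le_sup φ
  have extend_eq (φ : C([[a, b]], E)) {t : ℝ} (ht : t ∈ [[a, b]]) : extend φ t = φ ⟨t, ht⟩ :=
    IccExtend_of_mem _ _ ht
  have hint (φ : C([[a, b]], E)) : IntegrableOn (fun t => A t (extend φ t)) [[a, b]] :=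
    hA.apply_continuousOn (φ.continuous.Icc_extend').continuousOn isCompact_uIcc
  have hcont (φ : C([[a, b]], E)) :
      ContinuousOn (fun t => Y₀ + ∫ τ in e..t, A τ (extend φ τ)) [[a, b]] :=
    continuousOn_const.add (continuousOn_primitive_interval' (hint φ).intervalIntegrable he)
  let T : C([[a, b]], E) → C([[a, b]], E) := fun φ => ⟨_, (hcont φ).domRestrict⟩
  have hT : ContractingWith m.toNNReal T := by
    refine ⟨Real.toNNReal_lt_one.2 hsmall, LipschitzWith.of_dist_le_mul fun φ ψ => ?_⟩
    have hm : 0 ≤ m := setIntegral_nonneg measurableSet_uIcc fun t _ => norm_nonneg _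
    rw [Real.coe_toNNReal _ hm]
    refine (ContinuousMap.dist_le (by positivity)).2 fun t => ?_
    have hdiff : ∀ τ ∈ [[a, b]], ‖extend φ τ - extend ψ τ‖ ≤ dist φ ψ := fun τ hτ => by
      rw [extend_eq φ hτ, extend_eq ψ hτ, ← dist_eq_norm]
      exact ContinuousMap.dist_apply_le_dist _
    have := norm_integral_apply_le hA he t.2 hdiff
    simp only [map_sub] at this
    rwa [integral_sub ((hint φ).mono_set (uIcc_subset_uIcc he t.2)).intervalIntegrable
      ((hint ψ).mono_set (uIcc_subset_uIcc he t.2)).intervalIntegrable, ← dist_eq_norm,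
      ← dist_add_left Y₀] at this
  obtain hfix : T (hT.fixedPoint T) = hT.fixedPoint T := hT.fixedPoint_isFixedPt
  set φ := hT.fixedPoint T
  have hφ : ∀ t ∈ [[a, b]], extend φ t = Y₀ + ∫ τ in e..t, A τ (extend φ τ) := fun t ht => by
    rw [extend_eq φ ht]
    exact (DFunLike.congr_fun hfix ⟨t, ht⟩).symm
  have hφe : extend φ e = Y₀ := by rw [hφ e he, integral_same, add_zero]
  refine ⟨extend φ, solvesLinearODEOn_uIcc_of_eq_integral (hint φ) he fun t ht => ?_, hφe⟩
  rw [hφe, ← hφ t ht]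

theorem SolvesLinearODEOn.eqOn (hI : I.OrdConnected) (hA : LocallyIntegrableOn A I)
    (hY : SolvesLinearODEOn A I Y) (hZ : SolvesLinearODEOn A I Z) (he : e ∈ I)
    (hYZ : Y e = Z e) : EqOn Y Z I := by
  intro t ht
  have hsub : [[e, t]] ⊆ I := hI.uIcc_subset he ht
  have hA' : IntegrableOn A [[e, t]] := hA.integrableOn_compact_subset hsub isCompact_uIcc
  have hD : SolvesLinearODEOn A [[e, t]] (Y - Z) := (hY.sub hZ).mono hsub
  -- Whether `Y - Z` vanishes is locally constant on `[[e, t]]`, hence constant.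
  have key : ∀ x ∈ [[e, t]], ∀ y ∈ [[e, t]], (Y - Z) x = 0 ↔ (Y - Z) y = 0 := by
    refine fun x hx y hy => isPreconnected_uIcc.induction₂
      (fun x y => (Y - Z) x = 0 ↔ (Y - Z) y = 0) (fun x hx => ?_)
      (fun _ _ _ _ _ _ => Iff.trans) (fun _ _ _ _ => Iff.symm) hx hy
    filter_upwards [hA'.eventually_integral_norm_uIcc_lt ordConnected_uIcc hx one_pos,
      self_mem_nhdsWithin] with y hsmall hy
    have hxy : [[x, y]] ⊆ [[e, t]] := uIcc_subset_uIcc hx hy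
    have hDxy := hD.mono hxy
    have hAxy := hA'.mono_set hxy
    exact ⟨fun h => hDxy.eqOn_zero_of_integral_norm_lt_one hAxy hsmall left_mem_uIcc h
      right_mem_uIcc, fun h => hDxy.eqOn_zero_of_integral_norm_lt_one hAxy hsmall
      right_mem_uIcc h left_mem_uIcc⟩
  exact sub_eq_zero.1 ((key e left_mem_uIcc t right_mem_uIcc).1 (sub_eq_zero.2 hYZ))

theorem exists_solvesLinearODEOn_union (hI : I.OrdConnected) (hJ : J.OrdConnected)
    (hY : SolvesLinearODEOn A I Y) (hZ : SolvesLinearODEOn A J Z) (hIJ : (I ∩ J).Nonempty)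
    (hYZ : EqOn Y Z (I ∩ J)) : ∃ W, SolvesLinearODEOn A (I ∪ J) W ∧ EqOn W Y I := by
  classical
  refine ⟨I.piecewise Y Z, (hY.congr hI (piecewise_eqOn I Y Z).symm).union
    (hZ.congr hJ fun t ht => ?_) hIJ, piecewise_eqOn I Y Z⟩
  by_cases htI : t ∈ I
  · rw [piecewise_eq_of_mem _ _ _ htI, hYZ ⟨htI, ht⟩]
  · rw [piecewise_eq_of_notMem _ _ _ htI]

theorem exists_solvesLinearODEOn_uIcc [CompleteSpace E] (hA : IntegrableOn A [[a, b]])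
    (Y₀ : E) : ∃ Y, SolvesLinearODEOn A [[a, b]] Y ∧ Y a = Y₀ := by
  refine isPreconnected_uIcc.induction₂'
    (fun x y => ∀ Y₀ : E, ∃ Y, SolvesLinearODEOn A [[x, y]] Y ∧ Y x = Y₀)
    (fun x hx => ?_) (fun x y z hx hy _ hxy hyz => ?_) left_mem_uIcc right_mem_uIcc Y₀
  · filter_upwards [hA.eventually_integral_norm_uIcc_lt ordConnected_uIcc hx one_pos,
      self_mem_nhdsWithin] with y hsmall hy
    have hAxy := hA.mono_set (uIcc_subset_uIcc hx hy)
    refine ⟨fun Y₀ => exists_solvesLinearODEOn_uIcc_of_integral_norm_lt_one hAxy hsmall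
      left_mem_uIcc Y₀, fun Y₀ => ?_⟩
    rw [uIcc_comm]
    exact exists_solvesLinearODEOn_uIcc_of_integral_norm_lt_one hAxy hsmall right_mem_uIcc Y₀
  · intro Y₀
    obtain ⟨Y₁, hY₁, hY₁x⟩ := hxy Y₀
    obtain ⟨Y₂, hY₂, hY₂y⟩ := hyz (Y₁ y)
    have hA' : LocallyIntegrableOn A ([[x, y]] ∩ [[y, z]]) :=
      (hA.mono_set (inter_subset_left.trans (uIcc_subset_uIcc hx hy))).locallyIntegrableOn
    have hagree : EqOn Y₁ Y₂ ([[x, y]] ∩ [[y, z]]) :=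
      (hY₁.mono inter_subset_left).eqOn (ordConnected_uIcc.inter ordConnected_uIcc) hA'
        (hY₂.mono inter_subset_right) ⟨right_mem_uIcc, left_mem_uIcc⟩ hY₂y.symm
    obtain ⟨W, hW, hWY₁⟩ := exists_solvesLinearODEOn_union ordConnected_uIcc ordConnected_uIcc
      hY₁ hY₂ ⟨y, right_mem_uIcc, left_mem_uIcc⟩ hagree
    exact ⟨W, hW.mono uIcc_subset_uIcc_union_uIcc, (hWY₁ left_mem_uIcc).trans hY₁x⟩

theorem exists_solvesLinearODEOn [CompleteSpace E] (hI : I.OrdConnected)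
    (hA : LocallyIntegrableOn A I) {x₀ : ℝ} (hx₀ : x₀ ∈ I) (Y₀ : E) :
    ∃ Y, SolvesLinearODEOn A I Y ∧ Y x₀ = Y₀ := by
  have hA' : ∀ {t}, t ∈ I → IntegrableOn A [[x₀, t]] := fun ht =>
    hA.integrableOn_compact_subset (hI.uIcc_subset hx₀ ht) isCompact_uIcc
  choose! Ys hYs hYs₀ using fun t (ht : t ∈ I) => exists_solvesLinearODEOn_uIcc (hA' ht) Y₀
  have hagree : ∀ t ∈ I, ∀ t' ∈ [[x₀, t]], Ys t' t' = Ys t t' := by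
    intro t ht t' ht'
    have ht'I : t' ∈ I := hI.uIcc_subset hx₀ ht ht'
    exact (hYs t' ht'I).eqOn ordConnected_uIcc (hA' ht'I).locallyIntegrableOn
      ((hYs t ht).mono (uIcc_subset_uIcc_left ht')) left_mem_uIcc
      ((hYs₀ t' ht'I).trans (hYs₀ t ht).symm) right_mem_uIcc
  have hsol : ∀ t ∈ I, SolvesLinearODEOn A [[x₀, t]] fun t' => Ys t' t' := fun t ht =>
    (hYs t ht).congr ordConnected_uIcc fun t' ht' => (hagree t ht t' ht').symm
  refine ⟨fun t => Ys t t, fun x hx y hy => ?_, hYs₀ x₀ hx₀⟩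
  exact ((hsol x hx).union (hsol y hy) ⟨x₀, left_mem_uIcc, left_mem_uIcc⟩) x
    (Or.inl right_mem_uIcc) y (Or.inr right_mem_uIcc)

theorem SolvesLinearODEOn.hasAEDerivOn_comp [CompleteSpace E] (h : SolvesLinearODEOn A I Y)
    (L : E →L[ℝ] ℝ) : HasAEDerivOn I (fun t => L (Y t)) fun t => L (A t (Y t)) := by
  intro x hx y hy
  obtain ⟨hint, heq⟩ := h x hx y hy
  exact ⟨⟨L.integrable_comp hint.1, L.integrable_comp hint.2⟩,
    by rw [← map_sub, heq, L.intervalIntegral_comp_comm hint]⟩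

end LinearODE

section SturmLiouville

variable {I : Set ℝ} {p q r s : ℝ → ℝ} {lam : ℝ}

theorem ordConnected_EI (a b : EReal) : (EI a b).OrdConnected :=
  ordConnected_Ioo.preimage_mono EReal.coe_strictMono.monotone

theorem HasAEDerivOn.linComb {f fd g gd : ℝ → ℝ} (hf : HasAEDerivOn I f fd)
    (hg : HasAEDerivOn I g gd) (c₁ c₂ : ℝ) :
    HasAEDerivOn I (fun t => c₁ * f t + c₂ * g t) (fun t => c₁ * fd t + c₂ * gd t) := by
  intro x hx y hy
  obtain ⟨hfi, hfe⟩ := hf x hx y hy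
  obtain ⟨hgi, hge⟩ := hg x hx y hy
  refine ⟨(hfi.const_mul c₁).add (hgi.const_mul c₂), ?_⟩
  rw [integral_add (hfi.const_mul c₁) (hgi.const_mul c₂), intervalIntegral.integral_const_mul,
    intervalIntegral.integral_const_mul, ← hfe, ← hge]
  ring

theorem IsSolution.linComb {u v : ℝ → ℝ} (hu : IsSolution I p q r s lam u)
    (hv : IsSolution I p q r s lam v) (c₁ c₂ : ℝ) :
    IsSolution I p q r s lam fun t => c₁ * u t + c₂ * v t := by
  obtain ⟨ud, u1, u1d, ⟨hu_ac, hu1, hu1_ac⟩, hτu⟩ := hu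
  obtain ⟨vd, v1, v1d, ⟨hv_ac, hv1, hv1_ac⟩, hτv⟩ := hv
  refine ⟨_, _, _, ⟨hu_ac.linComb hv_ac c₁ c₂, ?_, hu1_ac.linComb hv1_ac c₁ c₂⟩, ?_⟩
  · filter_upwards [hu1, hv1] with t hut hvt ht
    rw [hut ht, hvt ht]
    ring
  · filter_upwards [hτu, hτv] with t hut hvt ht
    have hut := hut ht
    have hvt := hvt ht
    simp only [tauApp] at hut hvt ⊢
    linear_combination c₁ * hut + c₂ * hvt

theorem LinIndepOn.nontrivOn_linComb {u v : ℝ → ℝ} (h : LinIndepOn I u v) {c₁ c₂ : ℝ}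
    (hc : ¬(c₁ = 0 ∧ c₂ = 0)) : NontrivOn I fun t => c₁ * u t + c₂ * v t := by
  by_contra hw
  exact hc (h c₁ c₂ fun x hx => by_contra fun hne => hw ⟨x, hx, hne⟩)

theorem NontrivOn.linIndepOn {u v : ℝ → ℝ} (hu : NontrivOn I u) {x : ℝ} (hx : x ∈ I)
    (hux : u x = 0) (hvx : v x ≠ 0) : LinIndepOn I u v := by
  intro c₁ c₂ h
  have hc₂ : c₂ = 0 := by simpa [hux, hvx] using h x hx
  obtain ⟨y, hy, huy⟩ := hu
  exact ⟨by simpa [hc₂, huy] using h y hy, hc₂⟩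

theorem exists_ne_zero_of_det_eq_zero {K : Type*} [Field K] {a b c d : K}
    (h : a * d - c * b = 0) :
    ∃ c₁ c₂ : K, ¬(c₁ = 0 ∧ c₂ = 0) ∧ c₁ * a + c₂ * b = 0 ∧ c₁ * c + c₂ * d = 0 := by
  by_cases hab : a = 0 ∧ b = 0
  · by_cases hcd : c = 0 ∧ d = 0
    · exact ⟨1, 0, by simp, by simp [hab.1], by simp [hcd.1]⟩
    · exact ⟨d, -c, fun h' => hcd ⟨neg_eq_zero.1 h'.2, h'.1⟩, by simp [hab], by ring⟩
  · exact ⟨b, -a, fun h' => hab ⟨neg_eq_zero.1 h'.2, h'.1⟩, by ring, by linear_combination -h⟩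

/-- The coefficient matrix `[[-s, 1/p], [q - lam r, s]]` of the first-order system satisfied by
`(u, u^[1])` when `τ u = lam u`. -/
noncomputable def slSystem (p q r s : ℝ → ℝ) (lam t : ℝ) : ℝ × ℝ →L[ℝ] ℝ × ℝ :=
  s t • (-ContinuousLinearMap.fst ℝ ℝ ℝ).prod (ContinuousLinearMap.snd ℝ ℝ ℝ) +
    (1 / p t) • (ContinuousLinearMap.inl ℝ ℝ ℝ).comp (ContinuousLinearMap.snd ℝ ℝ ℝ) +
    (q t - lam * r t) • (ContinuousLinearMap.inr ℝ ℝ ℝ).comp (ContinuousLinearMap.fst ℝ ℝ ℝ)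

@[simp]
theorem slSystem_apply (t : ℝ) (Y : ℝ × ℝ) :
    slSystem p q r s lam t Y =
      (-s t * Y.1 + 1 / p t * Y.2, (q t - lam * r t) * Y.1 + s t * Y.2) := by
  ext <;> simp [slSystem]
  ring

theorem locallyIntegrableOn_slSystem {a b : EReal} (H : SLH a b p q r s) (lam : ℝ) :
    LocallyIntegrableOn (slSystem p q r s lam) (EI a b) := by
  have hsmul : ∀ {f : ℝ → ℝ} (L : ℝ × ℝ →L[ℝ] ℝ × ℝ), LocallyIntegrableOn f (EI a b) →
      LocallyIntegrableOn (fun t => f t • L) (EI a b) := fun L hf =>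
    (ContinuousLinearMap.toSpanSingleton ℝ L).locallyIntegrableOn_comp hf
  have hlam : LocallyIntegrableOn (fun t => lam * r t) (EI a b) := by
    simpa [Function.comp_def, mul_comm] using
      (ContinuousLinearMap.toSpanSingleton ℝ lam).locallyIntegrableOn_comp H.r_loc
  have h₁ := hsmul ((-ContinuousLinearMap.fst ℝ ℝ ℝ).prod (ContinuousLinearMap.snd ℝ ℝ ℝ)) H.s_loc
  have h₂ := hsmul ((ContinuousLinearMap.inl ℝ ℝ ℝ).comp (ContinuousLinearMap.snd ℝ ℝ ℝ))
    H.invp_loc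
  have hq : LocallyIntegrableOn (fun t => q t - lam * r t) (EI a b) := H.q_loc.sub hlam
  have h₃ := hsmul ((ContinuousLinearMap.inr ℝ ℝ ℝ).comp (ContinuousLinearMap.fst ℝ ℝ ℝ)) hq
  -- Naming `ε''` spares the elaborator a very slow search for the `ContinuousENorm` instance.
  exact LocallyIntegrableOn.add (ε'' := ℝ × ℝ →L[ℝ] ℝ × ℝ)
    (LocallyIntegrableOn.add (ε'' := ℝ × ℝ →L[ℝ] ℝ × ℝ) h₁ h₂) h₃

theorem isSolutionWith_of_solvesLinearODEOn {Y : ℝ → ℝ × ℝ}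
    (hp : ∀ᵐ t ∂volume, t ∈ I → p t ≠ 0) (hr : ∀ᵐ t ∂volume, t ∈ I → r t ≠ 0)
    (hY : SolvesLinearODEOn (slSystem p q r s lam) I Y) :
    IsSolutionWith I p q r s lam (fun t => (Y t).1) (fun t => (slSystem p q r s lam t (Y t)).1)
      (fun t => (Y t).2) (fun t => (slSystem p q r s lam t (Y t)).2) := by
  refine ⟨⟨hY.hasAEDerivOn_comp (ContinuousLinearMap.fst ℝ ℝ ℝ), ?_,
    hY.hasAEDerivOn_comp (ContinuousLinearMap.snd ℝ ℝ ℝ)⟩, ?_⟩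
  · filter_upwards [hp] with t hpt ht
    simp only [slSystem_apply]
    field_simp [hpt ht]
    ring
  · filter_upwards [hr] with t hrt ht
    simp only [tauApp, slSystem_apply]
    field_simp [hrt ht]
    ring

theorem exists_isSolutionWith {a b : EReal} (H : SLH a b p q r s) (lam : ℝ) {x : ℝ}
    (hx : x ∈ EI a b) (α β : ℝ) :
    ∃ u ud u1 u1d, IsSolutionWith (EI a b) p q r s lam u ud u1 u1d ∧ u x = α ∧ u1 x = β := by
  obtain ⟨Y, hY, hYx⟩ :=
    exists_solvesLinearODEOn (ordConnected_EI a b) (locallyIntegrableOn_slSystem H lam) hx (α, β)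
  have hp : ∀ᵐ t ∂volume, t ∈ EI a b → p t ≠ 0 := H.ppos.mono fun t h ht => (h ht).ne'
  have hr : ∀ᵐ t ∂volume, t ∈ EI a b → r t ≠ 0 := H.rpos.mono fun t h ht => (h ht).ne'
  exact ⟨_, _, _, _, isSolutionWith_of_solvesLinearODEOn hp hr hY, by simp [hYx], by simp [hYx]⟩

end SturmLiouville

/-- Theorem 4.2 (i) ⇔ (iii): `τ - λ` is disconjugate on `(a,b)` if and only if every pair
of real-valued linearly independent solutions `u₁, u₂` of `(τ - λ) u = 0` on `(a,b)`
satisfies `u₁(x₁) u₂(x₂) − u₁(x₂) u₂(x₁) ≠ 0` for all distinct `x₁, x₂ ∈ (a,b)`. -/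
theorem disconjugate_iff_two_point_determinant
    (a b : EReal) (p q r s : ℝ → ℝ) (H : SLH a b p q r s) (lam : ℝ) :
    Disconjugate (EI a b) p q r s lam ↔
      ∀ u₁ u₂ : ℝ → ℝ, IsSolution (EI a b) p q r s lam u₁ →
        IsSolution (EI a b) p q r s lam u₂ → LinIndepOn (EI a b) u₁ u₂ →
        ∀ x₁ ∈ EI a b, ∀ x₂ ∈ EI a b, x₁ ≠ x₂ →
          u₁ x₁ * u₂ x₂ - u₁ x₂ * u₂ x₁ ≠ 0 := by
  constructor
  · intro hdisc u₁ u₂ hu₁ hu₂ hind x₁ hx₁ x₂ hx₂ hne hdet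
    obtain ⟨c₁, c₂, hc, h₁, h₂⟩ := exists_ne_zero_of_det_eq_zero hdet
    exact hne (hdisc _ (hu₁.linComb hu₂ c₁ c₂) (hind.nontrivOn_linComb hc) x₁ hx₁ x₂ hx₂ h₁ h₂)
  · intro hdet u hu hnt x hx y hy hux huy
    by_contra hxy
    obtain ⟨v, vd, v1, v1d, hv, hvx, -⟩ := exists_isSolutionWith H lam hx 1 0
    exact hdet u v hu ⟨vd, v1, v1d, hv⟩ (hnt.linIndepOn hx hux (by simp [hvx])) x hx y hy hxy
      (by simp [hux, huy])
end

section
/- Finiteness of the weighted Dirichlet integral for maximal-domain functions (proved part of Corollary 2.24): Assume Hypothesis (H). Let h ∈ dom(T_max) be real-valued with h ∈ 𝔇_τ, let g ∈ dom(T_max), let c ∈ (a,b), and suppose h(x) > 0 for all x ∈ (a,c) and ∫_a^c dx/(p(x)·h(x)²) < ∞, and suppose the Wronskian W(h,g) is bounded on (a,c). Then ∫_a^c p(x)·h(x)²·|(g/h)′(x)|² dx = ∫_a^c |g^[1](x)·h(x) − g(x)·h^[1](x)|² / (p(x)·h(x)²) dx < ∞. -/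
open MeasureTheory Set Filter intervalIntegral

private lemma contOn_of_prim {S : Set ℝ} (hSopen : IsOpen S)
    {E : Type*} [NormedAddCommGroup E] [NormedSpace ℝ E] {f fd : ℝ → E}
    (h : ∀ x ∈ S, ∀ y ∈ S,
      IntervalIntegrable fd volume x y ∧ f y - f x = ∫ t in x..y, fd t) :
    ContinuousOn f S := by
  intro y₀ hy₀
  obtain ⟨ε, hε, hball⟩ := Metric.isOpen_iff.mp hSopen y₀ hy₀
  have hb₁ : y₀ - ε/2 ∈ S := by
    apply hball; simp only [Real.ball_eq_Ioo, Set.mem_Ioo]; constructor <;> linarith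
  have hb₂ : y₀ + ε/2 ∈ S := by
    apply hball; simp only [Real.ball_eq_Ioo, Set.mem_Ioo]; constructor <;> linarith
  have hint : IntervalIntegrable fd volume (min y₀ (y₀ - ε/2)) (max y₀ (y₀ + ε/2)) := by
    rw [min_eq_right (by linarith), max_eq_right (by linarith)]
    exact (h _ hb₁ _ hb₂).1
  have hcw : ContinuousWithinAt (fun y => f y₀ + ∫ t in y₀..y, fd t)
      (Icc (y₀ - ε/2) (y₀ + ε/2)) y₀ :=
    continuousWithinAt_const.add
      (intervalIntegral.continuousWithinAt_primitive (measure_singleton y₀) hint)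
  have hca : ContinuousAt (fun y => f y₀ + ∫ t in y₀..y, fd t) y₀ :=
    hcw.continuousAt (Icc_mem_nhds (by linarith) (by linarith))
  have heq : (fun y => f y₀ + ∫ t in y₀..y, fd t) =ᶠ[nhds y₀] f := by
    filter_upwards [hSopen.mem_nhds hy₀] with y hy
    have h2 := (h y₀ hy₀ y hy).2
    rw [← h2]; abel
  exact (hca.congr heq).continuousWithinAt

private lemma isOpen_EI (a b : EReal) : IsOpen (EI a b) := by
  have : EI a b = (fun x : ℝ => (x : EReal)) ⁻¹' (Set.Ioo a b) := rfl
  rw [this]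
  exact isOpen_Ioo.preimage continuous_coe_real_ereal

/-- Proved part of Corollary 2.24: if `h ∈ dom(T_max)` is real-valued with `h > 0` on
`(a,c)` and `∫_a^c dx/(p h²) < ∞`, and if the Wronskian `W(h,g)` is bounded on `(a,c)` for
a given `g ∈ dom(T_max)`, then
`∫_a^c p h² |(g/h)′|² dx = ∫_a^c |g^[1] h − g h^[1]|²/(p h²) dx < ∞`. -/
theorem finiteness_weighted_dirichlet_integral
    (a b : EReal) (p q r s : ℝ → ℝ) (H : SLH a b p q r s)
    (h hd h1 h1d : ℝ → ℝ)
    (hhdom : InDomTau (EI a b) p s h hd h1 h1d)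
    (hhL2 : IntegrableOn (fun x => r x * h x ^ 2) (EI a b) volume)
    (hhtauL2 : IntegrableOn (fun x => r x * (tauApp q r s h h1 h1d x) ^ 2) (EI a b) volume)
    (c : ℝ) (hc : c ∈ EI a b)
    (hpos : ∀ x ∈ EI a (c : EReal), 0 < h x)
    (hfin : IntegrableOn (fun x => 1 / (p x * h x ^ 2)) (EI a (c : EReal)) volume)
    (g gd g1 g1d : ℝ → ℂ) (hg : InDomMax a b p q r s g gd g1 g1d)
    (hW : ∃ M : ℝ, ∀ x ∈ EI a (c : EReal),
      ‖(h x : ℂ) * g1 x - (h1 x : ℂ) * g x‖ ≤ M) :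
    IntegrableOn (fun x => p x * h x ^ 2 *
        ‖(gd x * (h x : ℂ) - g x * (hd x : ℂ)) / ((h x : ℂ)) ^ 2‖ ^ 2)
        (EI a (c : EReal)) volume ∧
      IntegrableOn (fun x => ‖g1 x * (h x : ℂ) - g x * (h1 x : ℂ)‖ ^ 2 / (p x * h x ^ 2))
        (EI a (c : EReal)) volume ∧
      (∫ x in EI a (c : EReal), p x * h x ^ 2 *
          ‖(gd x * (h x : ℂ) - g x * (hd x : ℂ)) / ((h x : ℂ)) ^ 2‖ ^ 2)
        = ∫ x in EI a (c : EReal),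
            ‖g1 x * (h x : ℂ) - g x * (h1 x : ℂ)‖ ^ 2 / (p x * h x ^ 2) := by
  obtain ⟨M, hM⟩ := hW
  set S : Set ℝ := EI a (c : EReal) with hSdef
  have hSB : S ⊆ EI a b := fun x hx => ⟨hx.1, lt_trans hx.2 hc.2⟩
  have hSopen : IsOpen S := isOpen_EI a (c : EReal)
  have measS : MeasurableSet S := hSopen.measurableSet
  have hBopen : IsOpen (EI a b) := isOpen_EI a b
  -- continuity of h, h1, g, g1 on (a,b)
  have hhc : ContinuousOn h (EI a b) := contOn_of_prim hBopen hhdom.1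
  have hh1c : ContinuousOn h1 (EI a b) := contOn_of_prim hBopen hhdom.2.2
  have hgc : ContinuousOn g (EI a b) := contOn_of_prim hBopen hg.1.1
  have hg1c : ContinuousOn g1 (EI a b) := contOn_of_prim hBopen hg.1.2.2
  -- a.e. strong measurability on S
  have hhm : AEStronglyMeasurable (fun x => ((h x : ℝ) : ℂ)) (volume.restrict S) :=
    Complex.continuous_ofReal.comp_aestronglyMeasurable
      ((hhc.mono hSB).aestronglyMeasurable measS)
  have hh1m : AEStronglyMeasurable (fun x => ((h1 x : ℝ) : ℂ)) (volume.restrict S) :=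
    Complex.continuous_ofReal.comp_aestronglyMeasurable
      ((hh1c.mono hSB).aestronglyMeasurable measS)
  have hgm : AEStronglyMeasurable g (volume.restrict S) :=
    (hgc.mono hSB).aestronglyMeasurable measS
  have hg1m : AEStronglyMeasurable g1 (volume.restrict S) :=
    (hg1c.mono hSB).aestronglyMeasurable measS
  have hhrm : AEStronglyMeasurable h (volume.restrict S) :=
    (hhc.mono hSB).aestronglyMeasurable measS
  have hF2m : AEStronglyMeasurable
      (fun x => ‖g1 x * (h x : ℂ) - g x * (h1 x : ℂ)‖ ^ 2 / (p x * h x ^ 2))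
      (volume.restrict S) := by
    have hNum : AEStronglyMeasurable
        (fun x => ‖g1 x * (h x : ℂ) - g x * (h1 x : ℂ)‖ ^ 2) (volume.restrict S) := by
      have hsub : AEStronglyMeasurable
          (fun x => g1 x * (h x : ℂ) - g x * (h1 x : ℂ)) (volume.restrict S) :=
        (hg1m.mul hhm).sub (hgm.mul hh1m)
      exact hsub.norm.pow 2
    have hDen : AEMeasurable (fun x => p x * h x ^ 2) (volume.restrict S) :=
      H.measp.aemeasurable.mul ((hhrm.aemeasurable).pow_const 2)
    exact (hNum.aemeasurable.div hDen).aestronglyMeasurable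
  -- a.e. facts on S
  have hpae : ∀ᵐ x ∂(volume.restrict S), 0 < p x :=
    (ae_restrict_iff' measS).mpr (by
      filter_upwards [H.ppos] with x hx hxS
      exact hx (hSB hxS))
  have hhae : ∀ᵐ x ∂(volume.restrict S), 0 < h x :=
    (ae_restrict_iff' measS).mpr (Filter.Eventually.of_forall hpos)
  have hg1ae : ∀ᵐ x ∂(volume.restrict S),
      g1 x = (p x : ℂ) * (gd x + (s x : ℂ) * g x) :=
    (ae_restrict_iff' measS).mpr (by
      filter_upwards [hg.1.2.1] with x hx hxS
      exact hx (hSB hxS))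
  have hh1ae : ∀ᵐ x ∂(volume.restrict S),
      h1 x = p x * (hd x + s x * h x) :=
    (ae_restrict_iff' measS).mpr (by
      filter_upwards [hhdom.2.1] with x hx hxS
      exact hx (hSB hxS))
  have hMae : ∀ᵐ x ∂(volume.restrict S),
      ‖(h x : ℂ) * g1 x - (h1 x : ℂ) * g x‖ ≤ M :=
    (ae_restrict_iff' measS).mpr (Filter.Eventually.of_forall hM)
  -- key pointwise computation
  have hkey : ∀ᵐ x ∂(volume.restrict S),
      (p x * h x ^ 2 * ‖(gd x * (h x : ℂ) - g x * (hd x : ℂ)) / ((h x : ℂ)) ^ 2‖ ^ 2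
        = ‖g1 x * (h x : ℂ) - g x * (h1 x : ℂ)‖ ^ 2 / (p x * h x ^ 2))
      ∧ ‖g1 x * (h x : ℂ) - g x * (h1 x : ℂ)‖ ^ 2 / (p x * h x ^ 2)
          ≤ (max M 0) ^ 2 * (1 / (p x * h x ^ 2))
      ∧ 0 ≤ ‖g1 x * (h x : ℂ) - g x * (h1 x : ℂ)‖ ^ 2 / (p x * h x ^ 2) := by
    filter_upwards [hpae, hhae, hg1ae, hh1ae, hMae] with x hp hh hg1x hh1x hMx
    have hph2 : 0 < p x * h x ^ 2 := mul_pos hp (by positivity)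
    set D : ℂ := gd x * (h x : ℂ) - g x * (hd x : ℂ) with hD
    have hWD : g1 x * (h x : ℂ) - g x * (h1 x : ℂ) = (p x : ℂ) * D := by
      rw [hg1x, hh1x, hD]
      push_cast
      ring
    have hnW : ‖g1 x * (h x : ℂ) - g x * (h1 x : ℂ)‖ = p x * ‖D‖ := by
      rw [hWD, norm_mul, Complex.norm_real, Real.norm_eq_abs, abs_of_pos hp]
    have hnum : ‖(gd x * (h x : ℂ) - g x * (hd x : ℂ)) / ((h x : ℂ)) ^ 2‖
        = ‖D‖ / h x ^ 2 := by
      rw [← hD, norm_div, norm_pow, Complex.norm_real, Real.norm_eq_abs, abs_of_pos hh]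
    refine ⟨?_, ?_, ?_⟩
    · rw [hnum, hnW]
      rw [div_pow, mul_pow]
      field_simp
    · rw [div_le_iff₀ hph2]
      have hle : ‖g1 x * (h x : ℂ) - g x * (h1 x : ℂ)‖ ≤ max M 0 := by
        refine le_trans ?_ (le_max_left M 0)
        calc ‖g1 x * (h x : ℂ) - g x * (h1 x : ℂ)‖
            = ‖(h x : ℂ) * g1 x - (h1 x : ℂ) * g x‖ := by ring_nf
          _ ≤ M := hMx
      calc ‖g1 x * (h x : ℂ) - g x * (h1 x : ℂ)‖ ^ 2
          ≤ (max M 0) ^ 2 := pow_le_pow_left₀ (norm_nonneg _) hle 2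
        _ = (max M 0) ^ 2 * (1 / (p x * h x ^ 2)) * (p x * h x ^ 2) := by
            field_simp
    · exact div_nonneg (by positivity) hph2.le
  -- integrability of the second integrand
  have hInt2 : IntegrableOn
      (fun x => ‖g1 x * (h x : ℂ) - g x * (h1 x : ℂ)‖ ^ 2 / (p x * h x ^ 2)) S volume := by
    apply Integrable.mono' (hfin.const_mul ((max M 0) ^ 2)) hF2m
    filter_upwards [hkey] with x hx
    rw [Real.norm_eq_abs, abs_of_nonneg hx.2.2]
    exact hx.2.1
  have hEq : (fun x => p x * h x ^ 2 *
        ‖(gd x * (h x : ℂ) - g x * (hd x : ℂ)) / ((h x : ℂ)) ^ 2‖ ^ 2)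
      =ᵐ[volume.restrict S]
      (fun x => ‖g1 x * (h x : ℂ) - g x * (h1 x : ℂ)‖ ^ 2 / (p x * h x ^ 2)) := by
    filter_upwards [hkey] with x hx
    exact hx.1
  exact ⟨hInt2.congr hEq.symm, hInt2, integral_congr_ae hEq⟩
end
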